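/- arXiv:2509.17549 — 3 statements merged into one kernel-verified Lean document; each statement's English description precedes it below -/
import Mathlib

section
/- The SCAD function r_θ(t), defined piecewise as |t| for |t| ≤ 1, (−t² + 2θ|t| − 1)/(2(θ−1)) for 1 < |t| ≤ θ, and (θ+1)/2 for |t| > θ, with parameter θ > 2, is (θ−1)^{-1}-weakly convex, i.e., t ↦ r_θ(t) + t²/(2(θ−1)) is convex on ℝ. -/
/-!
Writing `u = |t|`, the function equals `(2θu - 1 + (1 - u)₊² + (u - θ)₊²) / (2(θ - 1))`: the
line through the middle piece (which is tangent to the outer pieces at `u = 1` and `u = θ`) plus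
squared hinges at the two breakpoints. This profile is convex, and it is nondecreasing on `[0, ∞)`
because there the hinge `(1 - u)₊²` has slope at least `-2`, while `2θu` has slope `2θ > 2`.
A convex function that is nondecreasing on `[0, ∞)`, composed with the convex function `|·|`,
is convex.
-/

open Set

/-- The SCAD function with parameter `θ`. -/
noncomputable def scad (θ t : ℝ) : ℝ :=
  if |t| ≤ 1 then |t|
  else if |t| ≤ θ then (-t ^ 2 + 2 * θ * |t| - 1) / (2 * (θ - 1))
  else (θ + 1) / 2

lemma ConvexOn.sq_max_zero {𝕜 E : Type*} [CommRing 𝕜] [LinearOrder 𝕜] [IsStrictOrderedRing 𝕜]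
    [AddCommGroup E] [Module 𝕜 E] {s : Set E} {f : E → 𝕜} (hf : ConvexOn 𝕜 s f) :
    ConvexOn 𝕜 s (fun x => max (f x) 0 ^ 2) :=
  (hf.sup (convexOn_const 0 hf.1)).pow (fun _ _ => le_max_right _ _) 2

lemma sq_max_one_sub_sub_sq_max_one_sub_le {a b : ℝ} (ha : 0 ≤ a) (hab : a ≤ b) :
    max (1 - a) 0 ^ 2 - max (1 - b) 0 ^ 2 ≤ 2 * (b - a) := by
  have hdiff : max (1 - a) 0 - max (1 - b) 0 ≤ b - a :=
    calc max (1 - a) 0 - max (1 - b) 0 ≤ max ((1 - a) - (1 - b)) (0 - 0) :=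
          max_sub_max_le_max _ _ _ _
      _ = b - a := by rw [sub_sub_sub_cancel_left, sub_self, max_eq_left (by linarith)]
  have hsum : max (1 - a) 0 + max (1 - b) 0 ≤ 2 := by
    linarith [max_le (by linarith : 1 - a ≤ 1) zero_le_one,
      max_le (by linarith : 1 - b ≤ 1) zero_le_one]
  have hanti : max (1 - b) 0 ≤ max (1 - a) 0 := by gcongr
  nlinarith

noncomputable def scadProfile (θ u : ℝ) : ℝ :=
  (2 * θ * u - 1 + max (1 - u) 0 ^ 2 + max (u - θ) 0 ^ 2) / (2 * (θ - 1))

section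

variable {θ : ℝ}

lemma convexOn_scadProfile (hθ : 1 ≤ θ) : ConvexOn ℝ univ (scadProfile θ) := by
  have hline : ConvexOn ℝ univ (fun u : ℝ => 2 * θ * u - 1) :=
    ((convexOn_id convex_univ).smul (c := 2 * θ) (by linarith)).sub (concaveOn_const 1 convex_univ)
  have hleft : ConvexOn ℝ univ (fun u : ℝ => max (1 - u) 0 ^ 2) :=
    ((convexOn_const 1 convex_univ).sub (concaveOn_id convex_univ)).sq_max_zero
  have hright : ConvexOn ℝ univ (fun u : ℝ => max (u - θ) 0 ^ 2) :=
    ((convexOn_id convex_univ).sub (concaveOn_const θ convex_univ)).sq_max_zero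
  refine (((hline.add hleft).add hright).smul (c := (2 * (θ - 1))⁻¹) (by simp; linarith)).congr ?_
  intro u _
  simp only [scadProfile, smul_eq_mul, Pi.add_apply]
  ring

lemma monotoneOn_scadProfile (hθ : 1 ≤ θ) : MonotoneOn (scadProfile θ) (Ici 0) := by
  intro a ha b _ hab
  have hleft := sq_max_one_sub_sub_sq_max_one_sub_le ha hab
  have hright : max (a - θ) 0 ^ 2 ≤ max (b - θ) 0 ^ 2 := by gcongr
  unfold scadProfile
  gcongr ?_ / _
  nlinarith [mul_nonneg (sub_nonneg.2 hθ) (sub_nonneg.2 hab)]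

lemma scad_add_sq_div_eq_scadProfile_abs (hθ : 1 < θ) (t : ℝ) :
    scad θ t + t ^ 2 / (2 * (θ - 1)) = scadProfile θ |t| := by
  have hθ' : θ - 1 ≠ 0 := by linarith
  rw [scad, scadProfile, ← sq_abs t]
  split_ifs with h1 h2
  · rw [max_eq_left (by linarith), max_eq_right (by linarith)]
    field_simp; ring
  · rw [max_eq_right (by linarith), max_eq_right (by linarith)]
    field_simp; ring
  · rw [max_eq_right (by linarith), max_eq_left (by linarith)]
    field_simp; ring

end

/-- SCAD is `(θ-1)⁻¹`-weakly convex. -/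
theorem scad_weaklyConvex (θ : ℝ) (hθ : 2 < θ) :
    ConvexOn ℝ Set.univ (fun t : ℝ => scad θ t + t ^ 2 / (2 * (θ - 1))) := by
  have hθ1 : 1 < θ := by linarith
  have hcomp : (fun t : ℝ => scad θ t + t ^ 2 / (2 * (θ - 1))) = scadProfile θ ∘ norm :=
    funext (scad_add_sq_div_eq_scadProfile_abs hθ1)
  rw [hcomp]
  refine ConvexOn.comp ?_ convexOn_univ_norm ?_ <;> rw [image_univ, range_norm]
  · exact (convexOn_scadProfile hθ1.le).subset (subset_univ _) (convex_Ici 0)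
  · exact monotoneOn_scadProfile hθ1.le
end

section
/- Let 𝔏_{r,σ} = {X ∈ ℝ^{n₁×n₂} : 0 < Rank(X) ≤ r, and for each j ≤ r, σ_j(X) ≥ σ or σ_j(X) = 0}, where σ_j(X) denotes the j-th largest singular value and σ > 0. Then 𝔏_{r,σ} is a closed subset of ℝ^{n₁×n₂}. -/
/-!
The eigenvalue condition on `Xᴴ * X` (no eigenvalue in `(0, σ²)`) is the closed condition
`(Xᴴ X)² - σ² Xᴴ X ⪰ 0`. Under it the open condition `0 < rank X` becomes closed: a nonzero
eigenvalue is at least `σ²`, so `X ≠ 0` iff `‖X‖²_F = tr (Xᴴ X) ≥ σ²`. Finally `rank X ≤ r` is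
closed because the rank is lower semicontinuous.
-/

/-- The set `𝔏_{r,σ}` of matrices of rank in `(0, r]` whose nonzero singular values
are all at least `σ` (the singular values of `X` are the square roots of the
eigenvalues of `Xᴴ * X`). -/
def lowRankSet (n₁ n₂ r : ℕ) (σ : ℝ) : Set (Matrix (Fin n₁) (Fin n₂) ℝ) :=
  {X | 0 < X.rank ∧ X.rank ≤ r ∧
    ∀ i, (Matrix.isHermitian_conjTranspose_mul_self X).eigenvalues i = 0 ∨
      σ ^ 2 ≤ (Matrix.isHermitian_conjTranspose_mul_self X).eigenvalues i}

namespace Matrix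

variable {m n 𝕜 : Type*}

theorem isClosed_setOf_rank_le [Fintype m] [Fintype n] [NontriviallyNormedField 𝕜]
    [CompleteSpace 𝕜] (r : ℕ) : IsClosed {X : Matrix m n 𝕜 | X.rank ≤ r} := by
  classical
  let toCLM : Matrix m n 𝕜 →ₗ[𝕜] (n → 𝕜) →L[𝕜] (m → 𝕜) :=
    LinearMap.toContinuousLinearMap.toLinearMap ∘ₗ toLin'.toLinearMap
  have hrank (X : Matrix m n 𝕜) : (toCLM X : (n → 𝕜) →ₗ[𝕜] (m → 𝕜)).rank = X.rank := by
    rw [rank, Module.finrank_eq_rank]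
    rfl
  have := (isOpen_setOfPred_nat_le_rank (r + 1)).preimage toCLM.continuous_of_finiteDimensional
  simpa [← isOpen_compl_iff, Set.compl_ofPred, hrank] using this

variable [RCLike 𝕜]

open scoped ComplexOrder in
theorem isClosed_setOf_posSemidef [Fintype n] : IsClosed {A : Matrix n n 𝕜 | A.PosSemidef} := by
  simp only [posSemidef_iff_dotProduct_mulVec, Set.ofPred_and, Set.ofPred_forall]
  refine .inter (isClosed_eq (by fun_prop) continuous_id) (isClosed_iInter fun x => ?_)
  exact isClosed_le continuous_const
    (continuous_const.dotProduct (continuous_id.matrix_mulVec continuous_const))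

open scoped ComplexOrder MatrixOrder in
theorem PosSemidef.posSemidef_mul_self_sub_smul_iff [Fintype n] [DecidableEq n]
    {A : Matrix n n 𝕜} (hA : A.PosSemidef) (c : ℝ) :
    (A * A - c • A).PosSemidef ↔
      ∀ i, hA.isHermitian.eigenvalues i = 0 ∨ c ≤ hA.isHermitian.eigenvalues i := by
  have hcfc : A * A - c • A = cfc (fun x : ℝ => x * (x - c)) A := by
    rw [cfc_mul .., cfc_sub .., cfc_id' .., cfc_const .., mul_sub, Algebra.algebraMap_eq_smul_one,
      mul_smul_comm, mul_one]
  rw [← nonneg_iff_posSemidef, hcfc, cfc_nonneg_iff _ A,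
    hA.isHermitian.spectrum_real_eq_range_eigenvalues, Set.forall_mem_range]
  refine forall_congr' fun i => ?_
  rcases (hA.eigenvalues_nonneg i).eq_or_lt with h | h
  · simp [← h]
  · rw [mul_nonneg_iff_of_pos_left h, sub_nonneg]
    simp [h.ne']

theorem IsHermitian.rank_pos_iff_le_re_trace [Fintype n] [DecidableEq n]
    {A : Matrix n n 𝕜} (hA : A.IsHermitian) {c : ℝ} (hc : 0 < c)
    (hgap : ∀ i, hA.eigenvalues i = 0 ∨ c ≤ hA.eigenvalues i) :
    0 < A.rank ↔ c ≤ RCLike.re A.trace := by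
  have hnonneg (i : n) : 0 ≤ hA.eigenvalues i := (hgap i).elim (·.ge) (hc.le.trans ·)
  rw [hA.rank_eq_card_non_zero_eigs, Fintype.card_pos_iff, hA.trace_eq_sum_eigenvalues]
  simp only [map_sum, RCLike.ofReal_re]
  constructor
  · rintro ⟨i, hi⟩
    exact ((hgap i).resolve_left hi).trans
      (Finset.single_le_sum (fun j _ => hnonneg j) (Finset.mem_univ i))
  · intro h
    by_contra! hzero
    have hzero' (i : n) : hA.eigenvalues i = 0 := not_not.mp fun hi => hzero.false ⟨i, hi⟩
    simp only [hzero', Finset.sum_const_zero] at h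
    linarith

end Matrix

open Matrix

theorem lowRankSet_eq_inter {n₁ n₂ r : ℕ} {σ : ℝ} (hσ : 0 < σ) :
    lowRankSet n₁ n₂ r σ =
      {X | σ ^ 2 ≤ (Xᴴ * X).trace} ∩ {X | X.rank ≤ r} ∩
        {X | ((Xᴴ * X) * (Xᴴ * X) - σ ^ 2 • (Xᴴ * X)).PosSemidef} := by
  ext X
  have hX := posSemidef_conjTranspose_mul_self X
  simp only [lowRankSet, Set.mem_inter_iff, Set.mem_ofPred_eq, hX.posSemidef_mul_self_sub_smul_iff]
  have hpos := hX.isHermitian.rank_pos_iff_le_re_trace (c := σ ^ 2) (by positivity)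
  rw [rank_conjTranspose_mul_self, RCLike.re_to_real] at hpos
  constructor
  · rintro ⟨h0, hr, hgap⟩
    exact ⟨⟨(hpos hgap).1 h0, hr⟩, hgap⟩
  · rintro ⟨⟨htr, hr⟩, hgap⟩
    exact ⟨(hpos hgap).2 htr, hr, hgap⟩

/-- `𝔏_{r,σ}` is a closed subset of the space of matrices. -/
theorem lowRankSet_isClosed (n₁ n₂ r : ℕ) (σ : ℝ) (hσ : 0 < σ) :
    IsClosed (lowRankSet n₁ n₂ r σ) := by
  rw [lowRankSet_eq_inter hσ]
  exact .inter (.inter (isClosed_le continuous_const (by fun_prop)) (isClosed_setOf_rank_le r))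
    (isClosed_setOf_posSemidef.preimage (by fun_prop))
end

section
/- Let J : ℝ^n → ℝ be continuously differentiable with L-Lipschitz gradient, C ⊆ ℝ^n nonempty closed, c ∈ (0, 1/2), and γ ∈ (0, (1−2c)/L]. Then for every x̄ ∈ C and every x ∈ P_C(x̄ − γ∇J(x̄)), the sufficient decrease inequality J(x) ≤ J(x̄) − cγ‖(x̄ − x)/γ‖² holds. -/
/-! By the descent lemma, `J x ≤ J xb - ⟪∇J xb, xb - x⟫ + L/2 ‖xb - x‖²`. Since `xb ∈ C` competes
with `x` in the projection of `xb - γ ∇J xb`, expanding the square gives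
`‖xb - x‖² ≤ 2γ ⟪∇J xb, xb - x⟫`. Together, `J x ≤ J xb - (1 - γL)/(2γ) ‖xb - x‖²`, and
`γL ≤ 1 - 2c` makes the coefficient at least `c/γ`. -/

open InnerProductSpace Set

variable {E : Type*} [NormedAddCommGroup E] [InnerProductSpace ℝ E]

theorem norm_sq_le_two_mul_inner_of_norm_sub_le {u w : E} (h : ‖u - w‖ ≤ ‖w‖) :
    ‖u‖ ^ 2 ≤ 2 * ⟪u, w⟫_ℝ := by
  have := pow_le_pow_left₀ (norm_nonneg _) h 2
  rw [norm_sub_sq_real] at this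
  linarith

variable [CompleteSpace E]

theorem HasGradientAt.hasDerivAt_comp_add_smul {f : E → ℝ} {g x v : E} {t : ℝ}
    (hf : HasGradientAt f g (x + t • v)) :
    HasDerivAt (fun s : ℝ => f (x + s • v)) ⟪g, v⟫_ℝ t := by
  have hline : HasDerivAt (fun s : ℝ => x + s • v) v t := by
    simpa using ((hasDerivAt_id t).smul_const v).const_add x
  have := hf.hasFDerivAt.comp_hasDerivAt t hline
  simp only [toDual_apply_apply] at this
  exact this

theorem le_add_inner_add_sq_of_lipschitz_gradient {f : E → ℝ} {f' : E → E}
    (hf : ∀ x, HasGradientAt f (f' x) x) {L : ℝ} (hLip : ∀ a b, ‖f' a - f' b‖ ≤ L * ‖a - b‖)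
    (x y : E) : f y ≤ f x + ⟪f' x, y - x⟫_ℝ + L / 2 * ‖y - x‖ ^ 2 := by
  set v := y - x
  -- compare `t ↦ f (x + t • v)` on `[0, 1]` with its quadratic upper model
  have hderiv (t : ℝ) : HasDerivAt (fun s : ℝ => f (x + s • v)) ⟪f' (x + t • v), v⟫_ℝ t :=
    (hf _).hasDerivAt_comp_add_smul
  have hbound (t : ℝ) : HasDerivAt (fun s : ℝ => f x + s * ⟪f' x, v⟫_ℝ + L / 2 * s ^ 2 * ‖v‖ ^ 2)
      (⟪f' x, v⟫_ℝ + L * t * ‖v‖ ^ 2) t := by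
    refine ((((hasDerivAt_id t).mul_const ⟪f' x, v⟫_ℝ).const_add (f x)).add
      (((hasDerivAt_pow 2 t).const_mul (L / 2)).mul_const (‖v‖ ^ 2))).congr_deriv ?_
    simp only [Nat.cast_ofNat]
    ring
  have hslope : ∀ t ∈ Ico (0 : ℝ) 1, ⟪f' (x + t • v), v⟫_ℝ ≤ ⟪f' x, v⟫_ℝ + L * t * ‖v‖ ^ 2 := by
    rintro t ⟨ht, -⟩
    calc ⟪f' (x + t • v), v⟫_ℝ = ⟪f' x, v⟫_ℝ + ⟪f' (x + t • v) - f' x, v⟫_ℝ := by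
          rw [inner_sub_left]; ring
      _ ≤ ⟪f' x, v⟫_ℝ + ‖f' (x + t • v) - f' x‖ * ‖v‖ := by
          gcongr; exact real_inner_le_norm _ _
      _ ≤ ⟪f' x, v⟫_ℝ + L * ‖t • v‖ * ‖v‖ := by
          gcongr; simpa using hLip (x + t • v) x
      _ = ⟪f' x, v⟫_ℝ + L * t * ‖v‖ ^ 2 := by
          rw [norm_smul, Real.norm_of_nonneg ht]; ring
  have := image_le_of_deriv_right_le_deriv_boundary
    (fun t _ => (hderiv t).continuousAt.continuousWithinAt)
    (fun t _ => (hderiv t).hasDerivWithinAt) (by simp)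
    (fun t _ => (hbound t).continuousAt.continuousWithinAt)
    (fun t _ => (hbound t).hasDerivWithinAt) hslope (right_mem_Icc.2 zero_le_one)
  simpa [v] using this

theorem sufficient_decrease_general {n : ℕ} (J : EuclideanSpace ℝ (Fin n) → ℝ)
    (J' : EuclideanSpace ℝ (Fin n) → EuclideanSpace ℝ (Fin n))
    (hgrad : ∀ x, HasGradientAt J (J' x) x)
    (L : ℝ) (hL : 0 < L) (hLip : ∀ a b, ‖J' a - J' b‖ ≤ L * ‖a - b‖)
    (C : Set (EuclideanSpace ℝ (Fin n)))
    (c : ℝ)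
    (γ : ℝ) (hγ0 : 0 < γ) (hγ : γ ≤ (1 - 2 * c) / L) :
    ∀ xb ∈ C, ∀ x, x ∈ C →
      (∀ y ∈ C, ‖(xb - γ • J' xb) - x‖ ≤ ‖(xb - γ • J' xb) - y‖) →
      J x ≤ J xb - c * γ * ‖γ⁻¹ • (xb - x)‖ ^ 2 := by
  intro xb hxb x _ hproj
  have hdescent := le_add_inner_add_sq_of_lipschitz_gradient hgrad hLip xb x
  have hstep : ‖xb - x‖ ^ 2 ≤ 2 * ⟪xb - x, γ • J' xb⟫_ℝ := by
    apply norm_sq_le_two_mul_inner_of_norm_sub_le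
    simpa only [sub_sub_cancel_left, norm_neg, sub_right_comm] using hproj xb hxb
  have hγL : γ * L ≤ 1 - 2 * c := (le_div_iff₀ hL).1 hγ
  rw [real_inner_smul_right] at hstep
  rw [← neg_sub xb x, inner_neg_right, norm_neg] at hdescent
  rw [norm_smul, mul_pow, Real.norm_of_nonneg (inv_nonneg.2 hγ0.le)]
  rw [real_inner_comm] at hstep
  have hγc : c * γ * (γ⁻¹ ^ 2 * ‖xb - x‖ ^ 2) = c * ‖xb - x‖ ^ 2 / γ := by
    field_simp
  rw [hγc, le_sub_iff_add_le, ← le_sub_iff_add_le', div_le_iff₀ hγ0]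
  nlinarith [mul_le_mul_of_nonneg_right hγL (sq_nonneg ‖xb - x‖)]

/-- Sufficient decrease property of the projected gradient step over a closed set. -/
theorem sufficient_decrease {n : ℕ} (J : EuclideanSpace ℝ (Fin n) → ℝ)
    (J' : EuclideanSpace ℝ (Fin n) → EuclideanSpace ℝ (Fin n))
    (hJ : ContDiff ℝ 1 J)
    (hgrad : ∀ x, HasGradientAt J (J' x) x)
    (L : ℝ) (hL : 0 < L) (hLip : ∀ a b, ‖J' a - J' b‖ ≤ L * ‖a - b‖)
    (C : Set (EuclideanSpace ℝ (Fin n))) (hne : C.Nonempty) (hclosed : IsClosed C)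
    (c : ℝ) (hc0 : 0 < c) (hc1 : c < 1 / 2)
    (γ : ℝ) (hγ0 : 0 < γ) (hγ : γ ≤ (1 - 2 * c) / L) :
    ∀ xb ∈ C, ∀ x, x ∈ C →
      (∀ y ∈ C, ‖(xb - γ • J' xb) - x‖ ≤ ‖(xb - γ • J' xb) - y‖) →
      J x ≤ J xb - c * γ * ‖γ⁻¹ • (xb - x)‖ ^ 2 :=
  sufficient_decrease_general J J' hgrad L hL hLip C c γ hγ0 hγ
end
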